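/- arXiv:2308.14131 — 2 statements merged into one kernel-verified Lean document; each statement's English description precedes it below -/
import Mathlib

section
/- For every integer k ≥ 4, letting u₀ = (k-1)/2 (as a real number), it holds that ln(1 + 1/(k - u₀)) - 1/(u₀ (k - u₀)) > 0. -/
/-! With `m = k - u₀ = (k + 1)/2`, the bound `1 - x⁻¹ ≤ log x` at `x = 1 + 1/m` gives
`log (1 + 1/m) ≥ 1/(m + 1)`, and `u₀ m > m + 1` reduces to `k² - 2k - 7 > 0`, true for `k ≥ 4`. -/

lemma Real.inv_add_one_le_log_one_add_inv {m : ℝ} (hm : 0 < m) :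
    (m + 1)⁻¹ ≤ Real.log (1 + m⁻¹) := by
  convert Real.one_sub_inv_le_log_of_pos (x := 1 + m⁻¹) (by positivity) using 1
  field_simp
  ring

lemma half_add_one_lt_mul_half {K : ℝ} (hK : 4 ≤ K) :
    (K + 1) / 2 + 1 < (K - 1) / 2 * ((K + 1) / 2) := by
  nlinarith

theorem stmt_2 (k : ℤ) (hk : 4 ≤ k) (u₀ : ℝ) (hu₀ : u₀ = ((k : ℝ) - 1) / 2) :
    Real.log (1 + 1 / ((k : ℝ) - u₀)) - 1 / (u₀ * ((k : ℝ) - u₀)) > 0 := by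
  have hK : (4 : ℝ) ≤ k := by exact_mod_cast hk
  have hm : (k : ℝ) - u₀ = (k + 1) / 2 := by rw [hu₀]; ring
  rw [hm, hu₀, gt_iff_lt, sub_pos, one_div, one_div]
  calc (((k : ℝ) - 1) / 2 * ((k + 1) / 2))⁻¹
      < (((k : ℝ) + 1) / 2 + 1)⁻¹ :=
        inv_strictAnti₀ (by linarith) (half_add_one_lt_mul_half hK)
    _ ≤ Real.log (1 + (((k : ℝ) + 1) / 2)⁻¹) :=
        Real.inv_add_one_le_log_one_add_inv (by linarith)
end

section
/- For all reals k ≥ 4 and u with (k-1)/2 ≤ u ≤ k/2, one has ln(1 + 1/(k-u)) - 1/((k-u)·u) ≥ ln(1 + 1/(k - (k-1)/2)) - 1/(((k-1)/2)·(k - (k-1)/2)), i.e., the function u ↦ ln(1 + 1/(k-u)) - 1/((k-u)u) is minimized at u = (k-1)/2 on this interval, and is strictly positive there. -/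
/-!
On `0 < u ≤ k/2` the function `u ↦ log (1 + 1/(k-u)) - 1/((k-u) u)` is monotone: its logarithmic
part grows because `k - u` shrinks, and `(k-u) u = k²/4 - (u - k/2)²` grows. So its minimum on
`[(k-1)/2, k/2]` is at the left endpoint, where the bound `log (1 + x) > 2x/(x+2)` makes it positive
once `k ≥ 4`.
-/

open Real Set

lemma monotoneOn_log_one_add_one_div_sub_one_div (k : ℝ) :
    MonotoneOn (fun u => log (1 + 1 / (k - u)) - 1 / ((k - u) * u)) (Ioc 0 (k / 2)) := by
  rintro a ⟨ha, -⟩ b ⟨hb, hbk⟩ hab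
  have hkb : 0 < k - b := by linarith
  have hka : 0 < k - a := by linarith
  have hlog : log (1 + 1 / (k - a)) ≤ log (1 + 1 / (k - b)) := by gcongr
  have hprod : (k - a) * a ≤ (k - b) * b := by nlinarith [mul_nonneg (sub_nonneg.2 hab) hkb.le]
  exact sub_le_sub hlog (one_div_le_one_div_of_le (by positivity) hprod)

lemma one_div_mul_lt_log_one_add_one_div {x y : ℝ} (hx : 0 < x) (hxy : 2 * x + 1 ≤ 2 * x * y) :
    1 / (y * x) < log (1 + 1 / x) := by
  have hy : 0 < y := by nlinarith
  calc 1 / (y * x) = 2 / (2 * x * y) := by field_simp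
    _ ≤ 2 / (2 * x + 1) := by gcongr
    _ = 2 * (1 / x) / (1 / x + 2) := by field_simp; ring
    _ < log (1 + 1 / x) := lt_log_one_add_of_pos (by positivity)

theorem stmt_12 (k u : ℝ) (hk : 4 ≤ k) (h1 : (k - 1) / 2 ≤ u) (h2 : u ≤ k / 2) :
    Real.log (1 + 1 / (k - u)) - 1 / ((k - u) * u) ≥
      Real.log (1 + 1 / (k - (k - 1) / 2)) -
        1 / (((k - 1) / 2) * (k - (k - 1) / 2)) ∧
    0 < Real.log (1 + 1 / (k - (k - 1) / 2)) -
        1 / (((k - 1) / 2) * (k - (k - 1) / 2)) := by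
  have hu₀ : (k - 1) / 2 ∈ Ioc 0 (k / 2) := ⟨by linarith, by linarith⟩
  have hu : u ∈ Ioc 0 (k / 2) := ⟨by linarith, h2⟩
  refine ⟨?_, ?_⟩
  · have h := monotoneOn_log_one_add_one_div_sub_one_div k hu₀ hu h1
    simpa only [ge_iff_le, mul_comm (k - (k - 1) / 2)] using h
  · rw [sub_pos]
    exact one_div_mul_lt_log_one_add_one_div (by linarith) (by nlinarith)
end
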